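/- Let D be an integrable real-valued random variable whose cumulative distribution function H is continuous on ℝ, let c ≥ 0, and let w ∈ ℝⁿ. Define F : ℝⁿ → ℝ by F(u) = c · E[(D − Σ_{k=1}^n w_k u_k)⁺]. Then F is differentiable on ℝⁿ, and for every u ∈ ℝⁿ and every index j, the partial derivative satisfies ∂F/∂u_j (u) = c · w_j · (H(Σ_{k=1}^n w_k u_k) − 1). -/

import Mathlib

/-!
By the layer-cake formula, `φ(ζ) = E[(D - ζ)⁺] = ∫_ζ^∞ P(D > s) ds`, so by the fundamental theorem
of calculus `φ'(ζ) = -P(D > ζ) = H(ζ) - 1` at every point where the tail `s ↦ P(D > s) = 1 - H(s)`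
is continuous, i.e. everywhere. Since `F = c · φ ∘ L` with `L u = ∑ k, w k * u k` linear, the
chain rule gives `∂F/∂u_j (u) = c · (H (L u) - 1) · w j`.
-/

open MeasureTheory Set Filter Topology

lemma integrableOn_Ioi_comp_add_right_iff {E : Type*} [NormedAddCommGroup E] {f : ℝ → E}
    (z : ℝ) : IntegrableOn (fun t => f (t + z)) (Ioi 0) ↔ IntegrableOn f (Ioi z) := by
  simpa [Function.comp_def] using
    (measurePreserving_add_right volume z).integrableOn_comp_preimage
      (measurableEmbedding_addRight z) (f := f) (s := Ioi z)

lemma setIntegral_Ioi_comp_add_right {E : Type*} [NormedAddCommGroup E] [NormedSpace ℝ E]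
    (f : ℝ → E) (z : ℝ) :
    ∫ t in Ioi 0, f (t + z) = ∫ s in Ioi z, f s := by
  simpa using (measurePreserving_add_right volume z).setIntegral_preimage_emb
    (measurableEmbedding_addRight z) f (Ioi z)

lemma hasDerivAt_setIntegral_Ioi {E : Type*} [NormedAddCommGroup E] [NormedSpace ℝ E]
    [CompleteSpace E] {g : ℝ → E} (hg : ∀ a, IntegrableOn g (Ioi a)) {ζ : ℝ}
    (hζ : ContinuousAt g ζ) : HasDerivAt (fun z => ∫ s in Ioi z, g s) (-g ζ) ζ := by
  have hsplit :
      (fun z => ∫ s in Ioi z, g s) = fun z => (∫ s in Ioi 0, g s) - ∫ s in 0..z, g s := by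
    funext z
    rw [← intervalIntegral.integral_Ioi_sub_Ioi' (hg 0) (hg z), sub_sub_cancel]
  have hint : ∀ a b, IntervalIntegrable g volume a b := fun a b =>
    (intervalIntegrable_iff.2 ((hg (min a b)).mono_set Ioc_subset_Ioi_self))
  have hmeas : StronglyMeasurableAtFilter g (𝓝 ζ) :=
    AEStronglyMeasurable.stronglyMeasurableAtFilter_of_mem (hg (ζ - 1)).aestronglyMeasurable
      (Ioi_mem_nhds (by linarith))
  rw [hsplit]
  exact (intervalIntegral.integral_hasDerivAt_right (hint 0 ζ) hmeas hζ).const_sub _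

lemma setOf_lt_max_sub_eq {α : Type*} {X : α → ℝ} {t : ℝ} (ht : 0 < t) (z : ℝ) :
    {a | t < max (X a - z) 0} = {a | t + z < X a} := by
  ext a
  simp only [mem_ofPred_eq, lt_max_iff, not_lt_of_gt ht, or_false]
  constructor <;> intro h <;> linarith

namespace MeasureTheory

variable {α : Type*} [MeasurableSpace α] {μ : Measure α}

lemma Integrable.integrableOn_Ioi_zero_measureReal_lt {f : α → ℝ} (hf : Integrable f μ)
    (hf_nn : 0 ≤ᵐ[μ] f) : IntegrableOn (fun t => μ.real {a | t < f a}) (Ioi 0) := by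
  have hmeas : Measurable fun t : ℝ => μ {a | t < f a} :=
    Antitone.measurable fun _ _ hst => measure_mono fun _ h => lt_of_le_of_lt hst h
  refine ⟨hmeas.ennreal_toReal.aestronglyMeasurable, ?_⟩
  calc ∫⁻ t in Ioi 0, ‖μ.real {a | t < f a}‖ₑ
      ≤ ∫⁻ t in Ioi 0, μ {a | t < f a} := by
        gcongr with t
        rw [measureReal_def, Real.enorm_eq_ofReal ENNReal.toReal_nonneg]
        exact ENNReal.ofReal_toReal_le
    _ = ∫⁻ a, ENNReal.ofReal (f a) ∂μ :=
        (lintegral_eq_lintegral_meas_lt μ hf_nn hf.aemeasurable).symm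
    _ < ⊤ := hf.lintegral_lt_top

lemma measureReal_lt_eq_one_sub [IsProbabilityMeasure μ] {X : α → ℝ} (hX : AEMeasurable X μ)
    (ζ : ℝ) : μ.real {a | ζ < X a} = 1 - μ.real {a | X a ≤ ζ} := by
  have hcompl : {a | ζ < X a} = {a | X a ≤ ζ}ᶜ := by ext; simp
  exact hcompl ▸ probReal_compl_eq_one_sub₀ (hX.nullMeasurable measurableSet_Iic)

variable [IsFiniteMeasure μ] {X : α → ℝ}

lemma Integrable.integrableOn_Ioi_measureReal_lt (hX : Integrable X μ) (z : ℝ) :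
    IntegrableOn (fun s => μ.real {a | s < X a}) (Ioi z) := by
  have hpos : Integrable (fun a => max (X a - z) 0) μ := (hX.sub (integrable_const z)).pos_part
  rw [← integrableOn_Ioi_comp_add_right_iff]
  refine (Integrable.integrableOn_Ioi_zero_measureReal_lt hpos
    (Eventually.of_forall fun a => le_max_right _ _)).congr_fun (fun t ht => ?_) measurableSet_Ioi
  simp only [setOf_lt_max_sub_eq ht]

lemma Integrable.integral_max_sub_eq (hX : Integrable X μ) (z : ℝ) :
    ∫ a, max (X a - z) 0 ∂μ = ∫ s in Ioi z, μ.real {a | s < X a} := by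
  have hpos : Integrable (fun a => max (X a - z) 0) μ := (hX.sub (integrable_const z)).pos_part
  rw [hpos.integral_eq_integral_meas_lt (Eventually.of_forall fun a => le_max_right _ _),
    ← setIntegral_Ioi_comp_add_right (fun s => μ.real {a | s < X a}) z]
  exact setIntegral_congr_fun measurableSet_Ioi fun t ht => by simp only [setOf_lt_max_sub_eq ht]

lemma Integrable.hasDerivAt_integral_max_sub (hX : Integrable X μ) {ζ : ℝ}
    (hζ : ContinuousAt (fun s => μ.real {a | s < X a}) ζ) :
    HasDerivAt (fun z => ∫ a, max (X a - z) 0 ∂μ) (-μ.real {a | ζ < X a}) ζ := by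
  simp only [hX.integral_max_sub_eq]
  exact hasDerivAt_setIntegral_Ioi hX.integrableOn_Ioi_measureReal_lt hζ

end MeasureTheory

lemma ContinuousLinearMap.sum_smul_proj_apply {ι : Type*} [Fintype ι] (w v : ι → ℝ) :
    (∑ k, w k • ContinuousLinearMap.proj k : (ι → ℝ) →L[ℝ] ℝ) v = ∑ k, w k * v k := by
  simp

theorem frankWolfe_partial_derivative_general
    {Ω : Type*} [MeasurableSpace Ω] (μ : Measure Ω) [IsProbabilityMeasure μ]
    (D : Ω → ℝ) (hDint : Integrable D μ)
    (H : ℝ → ℝ) (hH : ∀ ζ, H ζ = (μ {ω | D ω ≤ ζ}).toReal)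
    (hHcont : Continuous H)
    (c : ℝ) (n : ℕ) (w : Fin n → ℝ)
    (F : (Fin n → ℝ) → ℝ)
    (hF : ∀ u, F u = c * ∫ ω, max (D ω - ∑ k, w k * u k) 0 ∂μ) :
    Differentiable ℝ F ∧
      ∀ (u : Fin n → ℝ) (j : Fin n),
        fderiv ℝ F u (Pi.single j 1) = c * w j * (H (∑ k, w k * u k) - 1) := by
  have htail : ∀ ζ, μ.real {ω | ζ < D ω} = 1 - H ζ := fun ζ => by
    rw [measureReal_lt_eq_one_sub hDint.aemeasurable, hH, measureReal_def]
  have hφ : ∀ ζ, HasDerivAt (fun z => ∫ ω, max (D ω - z) 0 ∂μ) (H ζ - 1) ζ := fun ζ => by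
    have := hDint.hasDerivAt_integral_max_sub (ζ := ζ) (by simp only [htail]; fun_prop)
    rwa [htail, neg_sub] at this
  set L : (Fin n → ℝ) →L[ℝ] ℝ := ∑ k, w k • ContinuousLinearMap.proj k
  have hL : ∀ v, L v = ∑ k, w k * v k := ContinuousLinearMap.sum_smul_proj_apply w
  have hFderiv : ∀ u, HasFDerivAt F ((c * (H (L u) - 1)) • L) u := fun u => by
    have hFL : F = fun v => c * ∫ ω, max (D ω - L v) 0 ∂μ := funext fun v => by rw [hF, hL]
    rw [hFL, mul_smul]
    exact ((hφ (L u)).comp_hasFDerivAt u L.hasFDerivAt).const_mul c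
  refine ⟨fun u => (hFderiv u).differentiableAt, fun u j => ?_⟩
  rw [(hFderiv u).fderiv, smul_apply, hL, hL, smul_eq_mul]
  simp only [Pi.single_apply, mul_ite, mul_one, mul_zero, Finset.sum_ite_eq', Finset.mem_univ,
    if_true]
  ring

/-- Let `D` be an integrable random variable whose CDF `H` is continuous on `ℝ`,
`c ≥ 0` and `w ∈ ℝⁿ`.  Define `F(u) = c · E[(D − Σ_k w_k u_k)⁺]`.  Then `F` is
differentiable and `∂F/∂u_j (u) = c · w_j · (H(Σ_k w_k u_k) − 1)`. -/
theorem frankWolfe_partial_derivative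
    {Ω : Type*} [MeasurableSpace Ω] (μ : Measure Ω) [IsProbabilityMeasure μ]
    (D : Ω → ℝ) (hDm : Measurable D) (hDint : Integrable D μ)
    (H : ℝ → ℝ) (hH : ∀ ζ, H ζ = (μ {ω | D ω ≤ ζ}).toReal)
    (hHcont : Continuous H)
    (c : ℝ) (hc : 0 ≤ c) (n : ℕ) (w : Fin n → ℝ)
    (F : (Fin n → ℝ) → ℝ)
    (hF : ∀ u, F u = c * ∫ ω, max (D ω - ∑ k, w k * u k) 0 ∂μ) :
    Differentiable ℝ F ∧
      ∀ (u : Fin n → ℝ) (j : Fin n),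
        fderiv ℝ F u (Pi.single j 1) = c * w j * (H (∑ k, w k * u k) - 1) :=
  frankWolfe_partial_derivative_general μ D hDint H hH hHcont c n w F hF
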